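/- arXiv:2107.06694 — 2 statements merged into one kernel-verified Lean document; each statement's English description precedes it below -/
import Mathlib

section
/- (Claim 2) Let P be a popular matching in a roommates instance G that leaves exactly the vertex set U uncovered, and let Z = V ∖ N(U) ∖ U. If a matching edge (p,q) ∈ P can be reached in G_P by an alternating path starting from an edge blocking P, with q the last vertex of the path, then q ∈ Z. -/
/-- A roommates instance: a simple graph together with, for each vertex,
a ranking of vertices (lower rank = more preferred), injective on neighbors. -/
structure Roommates (V : Type*) where
  G : SimpleGraph V
  rank : V → V → ℕ
  rank_inj : ∀ u a b, G.Adj u a → G.Adj u b → rank u a = rank u b → a = b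

variable {V : Type*}

/-- `M` encodes a matching: `M u = some v` means `u` is matched to `v`. -/
def IsMatching (R : Roommates V) (M : V → Option V) : Prop :=
  ∀ u v, M u = some v → R.G.Adj u v ∧ M v = some u

/-- Vertex `v` prefers matching `M` to matching `M'`. -/
def Prefers (R : Roommates V) (M M' : V → Option V) (v : V) : Prop :=
  (∃ w, M v = some w ∧ M' v = none) ∨
  (∃ w w', M v = some w ∧ M' v = some w' ∧ R.rank v w < R.rank v w')

/-- `M` is popular: it never loses a head-to-head election. -/
def Popular [Fintype V] (R : Roommates V) (M : V → Option V) : Prop :=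
  ∀ M', IsMatching R M' →
    {v | Prefers R M' M v}.ncard ≤ {v | Prefers R M M' v}.ncard

/-- Edge `(u,v)` blocks `M`: each endpoint is unmatched or prefers the other
endpoint to its partner. -/
def Blocks (R : Roommates V) (M : V → Option V) (u v : V) : Prop :=
  R.G.Adj u v ∧ M u ≠ some v ∧
  (∀ w, M u = some w → R.rank u v < R.rank u w) ∧
  (∀ w, M v = some w → R.rank v u < R.rank v w)

def IsStable (R : Roommates V) (M : V → Option V) : Prop :=
  ∀ u v, ¬ Blocks R M u v

/-- `u` votes `+` for `v` against its situation in `M`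
(true when `u` is unmatched or prefers `v` to its `M`-partner). -/
def VotePlus (R : Roommates V) (M : V → Option V) (u v : V) : Prop :=
  ∀ w, M u = some w → R.rank u v < R.rank u w

/-- Non-matching edge of `G_M`, i.e. not labeled `(−,−)`. -/
def NonMatchEdge (R : Roommates V) (M : V → Option V) (u v : V) : Prop :=
  R.G.Adj u v ∧ M u ≠ some v ∧ (VotePlus R M u v ∨ VotePlus R M v u)

/-- `AltList A M b l`: the list of vertices `l` forms an alternating sequence,
whose first edge is a matching edge if `b = true` and an allowed (`A`)
non-matching edge if `b = false`. -/
def AltList (A : V → V → Prop) (M : V → Option V) : Bool → List V → Prop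
  | _, [] => True
  | _, [_] => True
  | true, u :: v :: rest => M u = some v ∧ AltList A M false (v :: rest)
  | false, u :: v :: rest => A u v ∧ AltList A M true (v :: rest)

/-- A matching of the subgraph induced on `W`. -/
def IsMatchingOn (R : Roommates V) (W : Set V) (M : V → Option V) : Prop :=
  IsMatching R M ∧ ∀ u v, M u = some v → u ∈ W ∧ v ∈ W

/-- Popularity within the subgraph induced on `W`. -/
def PopularOn (R : Roommates V) (W : Set V) (M : V → Option V) : Prop :=
  ∀ M', IsMatchingOn R W M' →
    {v | v ∈ W ∧ Prefers R M' M v}.ncard ≤ {v | v ∈ W ∧ Prefers R M M' v}.ncard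

/-- Stability within the subgraph induced on `W`. -/
def StableOn (R : Roommates V) (W : Set V) (M : V → Option V) : Prop :=
  ∀ u v, u ∈ W → v ∈ W → ¬ Blocks R M u v

/-! Suppose a path `x, y, …, q` of `G_P` alternates starting with a blocking edge `(x, y)`, and
`q` is adjacent to an unmatched vertex `u`. Re-pair the path followed by `u` along the
non-matching edges `(x, y), …, (q, u)` and unmatch the old partner `w` of `x`. Every non-matching
edge of `G_P` carries a `+` vote, and so does `(q, u)` because `u` was unmatched. Sending each
vertex that prefers `P` to its new partner, and `w` to `x`, injects these vertices into those
preferring the new matching other than `y`, so `P` loses the vote. If `x` is unmatched, adding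
`(x, y)` alone and unmatching the old partner of `y` already wins. -/

section Votes

variable {R : Roommates V} {M M' : V → Option V} {a b c : V}

theorem IsMatching.symm (hM : IsMatching R M) (h : M a = some c) : M c = some a :=
  (hM a c h).2

theorem IsMatching.eq_of_eq_some (hM : IsMatching R M) (ha : M a = some c) (hb : M b = some c) :
    a = b := by
  simpa [hb] using (hM.symm ha).symm.trans (hM.symm hb)

theorem prefers_of_votePlus (h : M' a = some c) (hv : VotePlus R M a c) : Prefers R M' M a := by
  cases hM : M a with
  | none => exact Or.inl ⟨c, h, hM⟩
  | some w => exact Or.inr ⟨c, w, h, hM, hv w hM⟩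

theorem not_prefers_of_eq (h : M a = M' a) : ¬ Prefers R M M' a := by
  rintro (⟨w, h1, h2⟩ | ⟨w, w', h1, h2, h3⟩)
  · simp [h, h2] at h1
  · obtain rfl : w = w' := by simpa [h, h2] using h1.symm
    exact lt_irrefl _ h3

theorem prefers_asymm (h : Prefers R M M' a) : ¬ Prefers R M' M a := by
  rintro (⟨z, hz, hz'⟩ | ⟨z, z', hz, hz', hr'⟩) <;>
    rcases h with (⟨w, hw, hw'⟩ | ⟨w, w', hw, hw', hr⟩) <;> simp_all
  obtain ⟨rfl, rfl⟩ : w = z' ∧ w' = z := by simp_all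
  exact lt_asymm hr hr'

end Votes

theorem ncard_prefers_lt [Finite V] {R : Roommates V} {P M : V → Option V}
    (hM : IsMatching R M) {x y w : V} (hMx : M x = some y)
    (hx : Prefers R M P x) (hy : Prefers R M P y)
    (hminus : ∀ a, Prefers R P M a → a = w ∨ ∃ c, M a = some c ∧ Prefers R M P c) :
    {a | Prefers R P M a}.ncard < {a | Prefers R M P a}.ncard := by
  classical
  have hxy : x ≠ y := (hM x y hMx).1.ne
  let f : V → V := fun a => if a = w then x else (M a).getD x
  have hf : ∀ a, Prefers R P M a → a ≠ w →
      ∃ c, M a = some c ∧ f a = c ∧ Prefers R M P c := by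
    intro a ha haw
    obtain ⟨c, hc, hcp⟩ := (hminus a ha).resolve_left haw
    exact ⟨c, hc, by simp [f, haw, hc], hcp⟩
  have hmaps : ∀ a ∈ {a | Prefers R P M a}, f a ∈ {a | Prefers R M P a} \ {y} := by
    intro a ha
    by_cases haw : a = w
    · simpa [f, haw, hxy] using hx
    obtain ⟨c, hc, hfa, hcp⟩ := hf a ha haw
    rw [hfa]
    refine ⟨hcp, fun hcy : c = y => ?_⟩
    subst hcy
    exact prefers_asymm hx (hM.eq_of_eq_some hc hMx ▸ ha)
  have hfw : ∀ a b, Prefers R P M a → Prefers R P M b →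
      a = w → b ≠ w → f a ≠ f b := by
    intro a b _ hb haw hbw hfab
    obtain ⟨d, hd, hfb, -⟩ := hf b hb hbw
    have hdx : d = x := by rw [← hfb, ← hfab]; simp [f, haw]
    subst hdx
    exact prefers_asymm hy (hM.eq_of_eq_some hd (hM.symm hMx) ▸ hb)
  have hinj : Set.InjOn f {a | Prefers R P M a} := by
    intro a ha b hb hfab
    by_cases haw : a = w <;> by_cases hbw : b = w
    · exact haw.trans hbw.symm
    · exact absurd hfab (hfw a b ha hb haw hbw)
    · exact absurd hfab.symm (hfw b a hb ha hbw haw)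
    · obtain ⟨c, hc, hfa, -⟩ := hf a ha haw
      obtain ⟨d, hd, hfb, -⟩ := hf b hb hbw
      obtain rfl : c = d := hfa.symm.trans (hfab.trans hfb)
      exact hM.eq_of_eq_some hc hd
  calc {a | Prefers R P M a}.ncard ≤ ({a | Prefers R M P a} \ {y}).ncard :=
        Set.ncard_le_ncard_of_injOn f hmaps hinj (Set.toFinite _)
    _ < {a | Prefers R M P a}.ncard := Set.ncard_sdiff_singleton_lt_of_mem hy (Set.toFinite _)

def Paired (E : V → V → Prop) : List V → Prop
  | [] => True
  | [_] => False
  | a :: b :: rest => E a b ∧ Paired E rest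

theorem Paired.mono {E E' : V → V → Prop} (h : ∀ a b, E a b → E' a b) :
    ∀ {L : List V}, Paired E L → Paired E' L
  | [], _ => trivial
  | a :: b :: _, ⟨hab, hrest⟩ => ⟨h a b hab, hrest.mono h⟩

section Pairing

variable [DecidableEq V]

def pairUp : List V → V → Option V
  | [], _ => none
  | [_], _ => none
  | a :: b :: rest, v =>
    if v = a then some b else if v = b then some a else pairUp rest v

theorem pairUp_spec {E : V → V → Prop} :
    ∀ {L : List V}, L.Nodup → Paired E L → ∀ v ∈ L,
      ∃ c ∈ L, pairUp L v = some c ∧ pairUp L c = some v ∧ (E v c ∨ E c v)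
  | a :: b :: rest, hnd, ⟨hab, hrest⟩, v, hv => by
    obtain ⟨⟨hab', har⟩, hbr, hnd'⟩ :
        (a ≠ b ∧ a ∉ rest) ∧ b ∉ rest ∧ rest.Nodup := by
      simpa using hnd
    rcases List.mem_cons.mp hv with rfl | hv
    · exact ⟨b, by simp, by simp [pairUp], by simp [pairUp, hab'.symm], Or.inl hab⟩
    rcases List.mem_cons.mp hv with rfl | hv
    · exact ⟨a, by simp, by simp [pairUp, hab'.symm], by simp [pairUp], Or.inr hab⟩
    obtain ⟨c, hc, hvc, hcv, hE⟩ := pairUp_spec hnd' hrest v hv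
    have hne : ∀ z ∈ rest, z ≠ a ∧ z ≠ b := fun z hz =>
      ⟨fun h => har (h ▸ hz), fun h => hbr (h ▸ hz)⟩
    refine ⟨c, by simp [hc], ?_, ?_, hE⟩
    · simpa [pairUp, hne v hv] using hvc
    · simpa [pairUp, hne c hc] using hcv

def rematch (P : V → Option V) (L : List V) (v : V) : Option V :=
  if v ∈ L then pairUp L v else if ∃ a ∈ L, P v = some a then none else P v

theorem rematch_of_mem {P : V → Option V} {L : List V} {v : V} (hv : v ∈ L) :
    rematch P L v = pairUp L v := by
  simp [rematch, hv]

theorem rematch_of_not_mem {P : V → Option V} {L : List V} {v : V} (hv : v ∉ L)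
    (hP : ¬ ∃ a ∈ L, P v = some a) : rematch P L v = P v := by
  simp only [rematch, hv, hP, if_false]

theorem IsMatching.rematch {R : Roommates V} {P : V → Option V} (hP : IsMatching R P)
    {L : List V} (hnd : L.Nodup) (hL : Paired R.G.Adj L) : IsMatching R (rematch P L) := by
  intro v c h
  by_cases hv : v ∈ L
  · obtain ⟨c', hc', hvc, hcv, hadj⟩ := pairUp_spec hnd hL v hv
    obtain rfl : c' = c := by simpa [rematch_of_mem hv, hvc] using h
    exact ⟨hadj.elim id .symm, by rw [rematch_of_mem hc', hcv]⟩
  by_cases hvL : ∃ a ∈ L, P v = some a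
  · rw [_root_.rematch, if_neg hv, if_pos hvL] at h
    cases h
  have hPv : P v = some c := by rwa [rematch_of_not_mem hv hvL] at h
  have hcL : c ∉ L := fun hc => hvL ⟨c, hc, hPv⟩
  have hcP : ¬ ∃ a ∈ L, P c = some a := by
    rintro ⟨a, ha, hca⟩
    obtain rfl : v = a := by simpa [hP.symm hPv] using hca
    exact hv ha
  exact ⟨(hP v c hPv).1, by rw [rematch_of_not_mem hcL hcP, hP.symm hPv]⟩

end Pairing

section AlternatingPath

variable {R : Roommates V} {A : V → V → Prop} {M : V → Option V}

theorem altList_tail_matched (hM : IsMatching R M) :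
    ∀ {l : List V}, AltList A M false l → Odd l.length →
      ∀ c ∈ l.tail, ∃ d ∈ l.tail, M c = some d
  | [], _, _, _, hc => by simp at hc
  | [_], _, _, _, hc => by simp at hc
  | [_, _], _, hodd, _, _ => by simp [Nat.odd_iff] at hodd
  | a :: b :: c :: rest, ⟨_, hbc, halt⟩, hodd, e, he => by
    have hodd' : Odd (c :: rest).length := by
      simpa [Nat.odd_add_one] using hodd
    rcases List.mem_cons.mp he with rfl | he
    · exact ⟨c, by simp, hbc⟩
    rcases List.mem_cons.mp he with rfl | he
    · exact ⟨b, by simp, hM.symm hbc⟩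
    obtain ⟨d, hd, hed⟩ := altList_tail_matched hM halt hodd' e he
    exact ⟨d, by simp [List.mem_of_mem_tail hd], hed⟩

theorem paired_append_of_altList {q u : V} (hqu : A q u) :
    ∀ {l : List V}, AltList A M false l → Odd l.length → l.getLast? = some q →
      Paired A (l ++ [u])
  | [], _, hodd, _ => by simp [Nat.odd_iff] at hodd
  | [a], _, _, hq => by
    obtain rfl : a = q := by simpa using hq
    exact ⟨hqu, trivial⟩
  | [_, _], _, hodd, _ => by simp [Nat.odd_iff] at hodd
  | a :: b :: c :: rest, ⟨hab, _, halt⟩, hodd, hq => by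
    have hodd' : Odd (c :: rest).length := by
      simpa [Nat.odd_add_one] using hodd
    exact ⟨hab, paired_append_of_altList hqu halt hodd' (by simpa using hq)⟩

end AlternatingPath

section Popularity

variable [Fintype V] {R : Roommates V} {P : V → Option V}

theorem not_popular_of_rematch [DecidableEq V] (hP : IsMatching R P)
    {x y w : V} {L : List V} (hnd : (x :: y :: L).Nodup) (hL : Paired (NonMatchEdge R P) L)
    (hblock : Blocks R P x y)
    (hw : ∀ a ∈ x :: y :: L, ∀ v ∉ x :: y :: L, P a = some v → v = w) :
    ¬ Popular R P := by
  intro hpop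
  set S := x :: y :: L
  have hS : Paired (NonMatchEdge R P) S :=
    ⟨⟨hblock.1, hblock.2.1, Or.inl hblock.2.2.1⟩, hL⟩
  set M := rematch P S
  have hM : IsMatching R M := hP.rematch hnd (hS.mono fun _ _ h => h.1)
  have hMx : M x = some y := by simp [M, rematch, S, pairUp]
  have hx : Prefers R M P x := prefers_of_votePlus hMx hblock.2.2.1
  have hy : Prefers R M P y := prefers_of_votePlus (hM.symm hMx) hblock.2.2.2
  refine (hpop M hM).not_gt (ncard_prefers_lt (w := w) hM hMx hx hy fun a ha => ?_)
  by_cases haS : a ∈ S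
  · obtain ⟨c, -, hac, -, hE⟩ := pairUp_spec hnd hS a haS
    have hMa : M a = some c := (rematch_of_mem haS).trans hac
    have hvote : VotePlus R P a c ∨ VotePlus R P c a := by
      rcases hE with hE | hE
      exacts [hE.2.2, hE.2.2.symm]
    refine .inr ⟨c, hMa, ?_⟩
    rcases hvote with h | h
    · exact absurd ha (prefers_asymm (prefers_of_votePlus hMa h))
    · exact prefers_of_votePlus (hM.symm hMa) h
  by_cases hPa : ∃ b ∈ S, P a = some b
  · obtain ⟨b, hb, hab⟩ := hPa
    exact .inl (hw b hb a haS (hP.symm hab))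
  · exact absurd ha (not_prefers_of_eq (rematch_of_not_mem haS hPa).symm)

theorem not_popular_of_blocks_of_unmatched (hP : IsMatching R P) {x y : V}
    (hblock : Blocks R P x y) (hx : P x = none) : ¬ Popular R P := by
  classical
  refine not_popular_of_rematch hP (L := []) (w := (P y).getD x) ?_ trivial hblock ?_
  · simpa using hblock.1.ne
  · intro a ha v _ hav
    rcases List.mem_pair.mp ha with rfl | rfl
    · simp [hx] at hav
    · simp [hav]

theorem not_popular_of_altList_to_unmatched (hP : IsMatching R P) {x y q u : V} {t : List V}
    (hnd : (x :: y :: t).Nodup) (halt : AltList (NonMatchEdge R P) P false (x :: y :: t))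
    (hodd : Odd (x :: y :: t).length) (hblock : Blocks R P x y)
    (hq : (x :: y :: t).getLast? = some q) (hu : P u = none) (hqu : R.G.Adj q u) :
    ¬ Popular R P := by
  classical
  by_cases hx : P x = none
  · exact not_popular_of_blocks_of_unmatched hP hblock hx
  obtain ⟨w, hw⟩ := Option.ne_none_iff_exists'.mp hx
  have htail := altList_tail_matched hP halt hodd
  have hut : u ∉ x :: y :: t := by
    intro h
    rcases List.mem_cons.mp h with rfl | h
    · exact hx hu
    · obtain ⟨d, -, hd⟩ := htail u h
      simp [hu] at hd
  have hqu' : NonMatchEdge R P q u :=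
    ⟨hqu, fun h => by simp [hP.symm h] at hu, .inr fun _ h => by simp [hu] at h⟩
  refine not_popular_of_rematch hP (L := t ++ [u]) (w := w) ?_
    (paired_append_of_altList hqu' halt hodd hq).2 hblock ?_
  · exact hnd.append (List.nodup_singleton u) (by simpa using hut)
  · intro a ha v hv hav
    rcases List.mem_append.mp (show a ∈ (x :: y :: t) ++ [u] from ha) with ha | ha
    · rcases List.mem_cons.mp ha with rfl | ha
      · exact Option.some_injective _ (hav.symm.trans hw)
      · obtain ⟨d, hd, had⟩ := htail a ha
        obtain rfl : d = v := Option.some_injective _ (had.symm.trans hav)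
        exact absurd (List.mem_cons_of_mem x (List.mem_append_left [u] hd)) hv
    · obtain rfl : a = u := by simpa using ha
      simp [hu] at hav

end Popularity

/-- Claim 2: let `P` be a popular matching leaving exactly `U`
uncovered.  If a matching edge of `P` is reached in `G_P` by an alternating path
starting with an edge blocking `P`, with `q` the last vertex of the path (so the
last edge is the matching edge `(p,q)`, forced by the odd length), then
`q ∈ Z = V ∖ N(U) ∖ U`. -/
theorem claim2 {V : Type*} [Fintype V] (R : Roommates V)
    (P : V → Option V) (hP : IsMatching R P) (hpop : Popular R P)
    (U : Set V) (hU : ∀ v, P v = none ↔ v ∈ U)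
    (l : List V) (hnd : l.Nodup)
    (x y : V) (t : List V) (hl : l = x :: y :: t) (hblock : Blocks R P x y)
    (halt : AltList (NonMatchEdge R P) P false l)
    (hodd : Odd l.length)
    (q : V) (hq : l.getLast? = some q) :
    q ∉ U ∧ ∀ u ∈ U, ¬ R.G.Adj q u := by
  subst hl
  have hqt : q ∈ (x :: y :: t).tail :=
    List.mem_of_getLast? (List.getLast?_cons_cons.symm.trans hq)
  obtain ⟨p, -, hqp⟩ := altList_tail_matched hP halt hodd q hqt
  refine ⟨fun hqU => by simp [(hU q).2 hqU] at hqp, fun u hu hqu => ?_⟩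
  exact not_popular_of_altList_to_unmatched hP hnd halt hodd hblock hq ((hU u).2 hu) hqu hpop
end

section
/- (Claim 4, backward direction) Let P_Z be popular but not stable in G' = G[V'], and let S be a matching on G[V ∖ V'] that is stable, covers exactly V ∖ V', and such that P = P_Z ∪ S induces the edge labeling: (+,−) on edges incident to U with + at the U-endpoint, (−,−) on edges between D and V ∖ V', and (+,−) with + at v' on edges (v',x) with v' ∈ V' ∖ (D ∪ U), x ∈ V ∖ V', and x ≻_{v'} P(v'). Then P is a popular matching in G leaving exactly U uncovered. -/
variable {V : Type*}

/-!
Fix a competing matching `M`. Every edge blocking `P` lies inside `V'`, where `P = P_Z`. Grow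
alternating trails from the `M`-edges that block `P`, alternating `P_Z`-edges with `M`-edges of
`G_{P_Z}` inside `V'`, and let `X` be the set of vertices they reach. A trail stops at a vertex
`u = P_Z(x)` with `x ∈ X` only when `u` is `M`-exposed or its `M`-edge is `(−,−)` for `P`: inside
`V'` because that edge is missing from `G_{P_Z}`, and leaving `V'` because `u` is dangerous.

The vote of every vertex in `M` against `P` is then the sum of its vote in
`M|_X ∪ P_Z|_(V' ∖ (X ∪ P_Z(X)))` against `P_Z`, which totals `≤ 0` because `P_Z` is popular in
`G'`, and its vote in `P_Z|_(X ∪ P_Z(X)) ∪ M|_rest` against `P`, which totals `≤ 0` because that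
matching contains no edge blocking `P`.
-/

section Basic

variable {R : Roommates V} {P Q M : V → Option V} {u v : V}

lemma not_votePlus_iff :
    ¬ VotePlus R M u v ↔ ∃ w, M u = some w ∧ R.rank u w ≤ R.rank u v := by
  simp [VotePlus]

lemma votePlus_congr (h : P u = Q u) : VotePlus R P u v ↔ VotePlus R Q u v := by
  unfold VotePlus; rw [h]

lemma blocks_congr (hu : P u = Q u) (hv : P v = Q v) : Blocks R P u v ↔ Blocks R Q u v := by
  unfold Blocks; rw [hu, hv]

lemma Blocks.symm (hP : IsMatching R P) (h : Blocks R P u v) : Blocks R P v u :=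
  ⟨h.1.symm, fun hvu => h.2.1 (hP v u hvu).2, h.2.2.2, h.2.2.1⟩

def IsDeadEnd (R : Roommates V) (P M : V → Option V) (u : V) : Prop :=
  M u = none ∨ ∃ b, M u = some b ∧ ¬ VotePlus R P u b ∧ ¬ VotePlus R P b u

end Basic

section Votes

variable {R : Roommates V} {A A' B B' M P : V → Option V} {u v a b : V}

open Classical in
noncomputable def vote (R : Roommates V) (A B : V → Option V) (v : V) : ℤ :=
  (if Prefers R A B v then 1 else 0) - (if Prefers R B A v then 1 else 0)

lemma Prefers.exists_eq_some (h : Prefers R A B v) : ∃ w, A v = some w := by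
  rcases h with ⟨w, hw, -⟩ | ⟨w, -, hw, -⟩ <;> exact ⟨w, hw⟩

lemma vote_congr (hA : A v = A' v) (hB : B v = B' v) : vote R A B v = vote R A' B' v := by
  unfold vote Prefers; rw [hA, hB]

lemma vote_eq_zero_of_eq (h : A v = B v) : vote R A B v = 0 :=
  (vote_congr h rfl).trans (sub_self _)

lemma vote_le_one (R : Roommates V) (A B : V → Option V) (v : V) : vote R A B v ≤ 1 := by
  unfold vote; split_ifs <;> omega

lemma vote_nonpos_of_eq_none (hA : A v = none) : vote R A B v ≤ 0 := by
  have : ¬ Prefers R A B v := by simp [Prefers, hA]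
  rw [vote, if_neg this]
  split_ifs <;> omega

lemma vote_eq_neg_one_of_eq_none (hA : A v = none) (hB : B v = some b) : vote R A B v = -1 := by
  simp [vote, Prefers, hA, hB]

lemma vote_eq_neg_one_of_rank_lt (hA : A v = some a) (hB : B v = some b)
    (h : R.rank v b < R.rank v a) : vote R A B v = -1 := by
  simp [vote, Prefers, hA, hB, h, h.not_gt]

lemma vote_eq_neg_one_of_not_votePlus (hB : IsMatching R B) (hA : A v = some a)
    (hadj : R.G.Adj v a) (hne : B v ≠ some a) (h : ¬ VotePlus R B v a) : vote R A B v = -1 := by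
  obtain ⟨w, hw, hle⟩ := not_votePlus_iff.1 h
  have hwa : R.rank v w ≠ R.rank v a := fun he =>
    hne (hw.trans (congrArg some (R.rank_inj v w a (hB v w hw).1 hadj he)))
  exact vote_eq_neg_one_of_rank_lt hA hw (lt_of_le_of_ne hle hwa)

lemma vote_add_vote_nonpos (hM : IsMatching R M) (hP : IsMatching R P) (huv : M u = some v)
    (hb : ¬ Blocks R P u v) : vote R M P u + vote R M P v ≤ 0 := by
  by_cases hPuv : P u = some v
  · rw [vote_eq_zero_of_eq (huv.trans hPuv.symm),
      vote_eq_zero_of_eq ((hM u v huv).2.trans (hP u v hPuv).2.symm), add_zero]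
  have hPvu : P v ≠ some u := fun h => hPuv (hP v u h).2
  have hadj := (hM u v huv).1
  have : ¬ VotePlus R P u v ∨ ¬ VotePlus R P v u := by
    by_contra! h
    exact hb ⟨hadj, hPuv, h.1, h.2⟩
  rcases this with h | h
  · linarith [vote_eq_neg_one_of_not_votePlus hP huv hadj hPuv h, vote_le_one R M P v]
  · linarith [vote_eq_neg_one_of_not_votePlus hP (hM u v huv).2 hadj.symm hPvu h,
      vote_le_one R M P u]

variable [Fintype V]

lemma sum_nonpos_of_isMatching (hM : IsMatching R M) (f : V → ℤ)
    (hnone : ∀ v, M v = none → f v ≤ 0) (hedge : ∀ u v, M u = some v → f u + f v ≤ 0) :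
    ∑ v, f v ≤ 0 := by
  set σ : V → V := fun v => (M v).getD v
  have hσ : Function.Involutive σ := fun v => by
    cases h : M v with
    | none => simp [σ, h]
    | some u => simp [σ, h, (hM v u h).2]
  have hpair : ∑ v, (f v + f (σ v)) ≤ 0 := Finset.sum_nonpos fun v _ => by
    cases h : M v <;> simp [σ, h, hnone, hedge]
  have hperm := Equiv.sum_comp (hσ.toPerm σ) f
  rw [Function.Involutive.coe_toPerm] at hperm
  rw [Finset.sum_add_distrib, hperm] at hpair
  linarith

lemma sum_vote_nonpos_of_not_blocks (hM : IsMatching R M) (hP : IsMatching R P)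
    (h : ∀ u v, M u = some v → ¬ Blocks R P u v) : ∑ v, vote R M P v ≤ 0 :=
  sum_nonpos_of_isMatching hM _ (fun _ hv => vote_nonpos_of_eq_none hv)
    (fun u v huv => vote_add_vote_nonpos hM hP huv (h u v huv))

lemma sum_vote_eq_ncard_sub (A B : V → Option V) :
    ∑ v, vote R A B v = ({v | Prefers R A B v}.ncard : ℤ) - {v | Prefers R B A v}.ncard := by
  classical
  simp only [vote, Finset.sum_sub_distrib, Finset.sum_boole, Set.ncard_eq_toFinset_card']
  simp

end Votes

section Splice

variable {R : Roommates V} {A B : V → Option V} {s : Set V} {v : V}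

open Classical in
noncomputable def splice (s : Set V) (A B : V → Option V) : V → Option V := fun v =>
  if v ∈ s then A v else if ∃ u ∈ s, B v = some u then none else B v

lemma splice_of_mem (hv : v ∈ s) : splice s A B v = A v := if_pos hv

lemma splice_of_partner_mem (hv : v ∉ s) (h : ∃ u ∈ s, B v = some u) :
    splice s A B v = none := by
  rw [splice, if_neg hv, if_pos h]

lemma splice_of_partner_not_mem (hv : v ∉ s) (h : ¬ ∃ u ∈ s, B v = some u) :
    splice s A B v = B v := by
  rw [splice, if_neg hv, if_neg h]

lemma isMatching_splice (hA : IsMatching R A) (hB : IsMatching R B)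
    (hs : ∀ v ∈ s, ∀ u, A v = some u → u ∈ s) : IsMatching R (splice s A B) := by
  intro u v huv
  by_cases hu : u ∈ s
  · rw [splice_of_mem hu] at huv
    exact ⟨(hA u v huv).1, by rw [splice_of_mem (hs u hu v huv), (hA u v huv).2]⟩
  by_cases hBu : ∃ w ∈ s, B u = some w
  · rw [splice_of_partner_mem hu hBu] at huv; cases huv
  rw [splice_of_partner_not_mem hu hBu] at huv
  have hv : v ∉ s := fun hv => hBu ⟨v, hv, huv⟩
  have hBv : ¬ ∃ w ∈ s, B v = some w := by
    rintro ⟨w, hw, hvw⟩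
    rw [(hB u v huv).2] at hvw
    exact hu (Option.some.inj hvw ▸ hw)
  exact ⟨(hB u v huv).1, by rw [splice_of_partner_not_mem hv hBv, (hB u v huv).2]⟩

lemma splice_eq_some {w : V} (h : splice s A B v = some w) :
    (v ∈ s ∧ A v = some w) ∨ (v ∉ s ∧ B v = some w) := by
  by_cases hv : v ∈ s
  · exact Or.inl ⟨hv, by rwa [splice_of_mem hv] at h⟩
  by_cases hB : ∃ u ∈ s, B v = some u
  · rw [splice_of_partner_mem hv hB] at h; cases h
  · exact Or.inr ⟨hv, by rwa [splice_of_partner_not_mem hv hB] at h⟩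

end Splice

section Surgery

variable {R : Roommates V} {W X : Set V} {Q P M : V → Option V}

lemma sum_vote_nonpos_of_popularOn [Fintype V] (hQW : ∀ u v, Q u = some v → u ∈ W)
    (hpop : PopularOn R W Q) {N : V → Option V} (hN : IsMatchingOn R W N) :
    ∑ v, vote R N Q v ≤ 0 := by
  have hsupp : ∀ {A B : V → Option V}, (∀ u v, A u = some v → u ∈ W) →
      {v | v ∈ W ∧ Prefers R A B v} = {v | Prefers R A B v} := fun hA => Set.ext fun v =>
    ⟨And.right, fun h => let ⟨w, hw⟩ := h.exists_eq_some; ⟨hA v w hw, h⟩⟩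
  have := hpop N hN
  rw [hsupp fun u v h => (hN.2 u v h).1, hsupp hQW] at this
  rw [sum_vote_eq_ncard_sub]
  omega

lemma vote_exit (hM : IsMatching R M) (hP : IsMatching R P) (hQ : IsMatching R Q)
    (hQW : ∀ u v, Q u = some v → u ∈ W) (hPW : ∀ v ∈ W, P v = Q v)
    (hXM : ∀ v ∈ X, ∀ u, M v = some u → u ∈ X)
    (hexit : ∀ x ∈ X, ∀ u, Q x = some u → u ∉ X → IsDeadEnd R P M u)
    {u x : V} (hu : u ∉ X) (hx : x ∈ X) (hux : Q u = some x) : vote R M P u = -1 := by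
  have hPu : P u = some x := (hPW u (hQW u x hux)).trans hux
  rcases hexit x hx u (hQ u x hux).2 hu with hMu | ⟨b, hMu, hub, -⟩
  · exact vote_eq_neg_one_of_eq_none hMu hPu
  · have hbx : b ≠ x := fun hbx => hu (hXM x hx u (hbx ▸ (hM u b hMu).2))
    have hPub : P u ≠ some b := by
      rw [hPu]; exact fun h => hbx (Option.some.inj h).symm
    exact vote_eq_neg_one_of_not_votePlus hP hMu (hM u b hMu).1 hPub hub

lemma vote_partner_of_exit (hM : IsMatching R M) (hP : IsMatching R P) (hQ : IsMatching R Q)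
    (hQW : ∀ u v, Q u = some v → u ∈ W) (hPW : ∀ v ∈ W, P v = Q v)
    (hexit : ∀ x ∈ X, ∀ u, Q x = some u → u ∉ X → IsDeadEnd R P M u)
    {v u x : V} (hv : v ∉ X) (hu : u ∉ X) (hx : x ∈ X) (hux : Q u = some x)
    (hvu : M v = some u) : vote R M P v = -1 ∧ ∃ w, P v = some w := by
  have hPu : P u = some x := (hPW u (hQW u x hux)).trans hux
  rcases hexit x hx u (hQ u x hux).2 hu with hMu | ⟨b, hMu, -, hbu⟩
  · simp [(hM v u hvu).2] at hMu
  rw [Option.some.inj (hMu.symm.trans (hM v u hvu).2)] at hbu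
  have hPvu : P v ≠ some u := fun h => hv (Option.some.inj ((hP v u h).2.symm.trans hPu) ▸ hx)
  exact ⟨vote_eq_neg_one_of_not_votePlus hP hvu (hM v u hvu).1 hPvu hbu,
    let ⟨w, hw, _⟩ := not_votePlus_iff.1 hbu; ⟨w, hw⟩⟩

def partnerClosure (Q : V → Option V) (X : Set V) : Set V :=
  {v | v ∈ X ∨ ∃ x ∈ X, Q v = some x}

lemma vote_eq_vote_splice_add_vote_splice (hM : IsMatching R M) (hP : IsMatching R P)
    (hQ : IsMatching R Q) (hQW : ∀ u v, Q u = some v → u ∈ W) (hPW : ∀ v ∈ W, P v = Q v)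
    (hXW : X ⊆ W) (hXM : ∀ v ∈ X, ∀ u, M v = some u → u ∈ X)
    (hexit : ∀ x ∈ X, ∀ u, Q x = some u → u ∉ X → IsDeadEnd R P M u) (v : V) :
    vote R M P v =
      vote R (splice (partnerClosure Q X) Q M) P v + vote R (splice X M Q) Q v := by
  by_cases hvX : v ∈ X
  · have hPv := hPW v (hXW hvX)
    rw [vote_eq_zero_of_eq
      ((splice_of_mem (s := partnerClosure Q X) (Or.inl hvX)).trans hPv.symm), zero_add]
    exact vote_congr (splice_of_mem hvX).symm hPv
  by_cases hvQ : ∃ x ∈ X, Q v = some x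
  · obtain ⟨x, hx, hvx⟩ := hvQ
    rw [vote_exit hM hP hQ hQW hPW hXM hexit hvX hx hvx,
      vote_eq_zero_of_eq ((splice_of_mem (s := partnerClosure Q X) (Or.inr ⟨x, hx, hvx⟩)).trans
        (hPW v (hQW v x hvx)).symm),
      vote_eq_neg_one_of_eq_none (splice_of_partner_mem hvX ⟨x, hx, hvx⟩) hvx, zero_add]
  have hvC : v ∉ partnerClosure Q X := by rintro (h | h) <;> contradiction
  rw [vote_eq_zero_of_eq (splice_of_partner_not_mem hvX hvQ), add_zero]
  by_cases hMv : ∃ u ∈ partnerClosure Q X, M v = some u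
  · obtain ⟨u, hu, hvu⟩ := hMv
    have huX : u ∉ X := fun huX => hvX (hXM u huX v (hM v u hvu).2)
    obtain ⟨x, hx, hux⟩ := hu.resolve_left huX
    obtain ⟨hvote, w, hw⟩ := vote_partner_of_exit hM hP hQ hQW hPW hexit hvX huX hx hux hvu
    rw [hvote, vote_eq_neg_one_of_eq_none (splice_of_partner_mem hvC ⟨u, hu, hvu⟩) hw]
  · exact vote_congr (splice_of_partner_not_mem hvC hMv).symm rfl

theorem sum_vote_nonpos_of_surgery [Fintype V] (hM : IsMatching R M) (hP : IsMatching R P)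
    (hQ : IsMatching R Q) (hQW : ∀ u v, Q u = some v → u ∈ W) (hPW : ∀ v ∈ W, P v = Q v)
    (hpop : PopularOn R W Q) (hXW : X ⊆ W) (hXM : ∀ v ∈ X, ∀ u, M v = some u → u ∈ X)
    (hXbad : ∀ u v, M u = some v → Blocks R P u v → u ∈ X)
    (hexit : ∀ x ∈ X, ∀ u, Q x = some u → u ∉ X → IsDeadEnd R P M u) :
    ∑ v, vote R M P v ≤ 0 := by
  have hCQ : ∀ v ∈ partnerClosure Q X, ∀ u, Q v = some u → u ∈ partnerClosure Q X := by
    rintro v (hv | ⟨x, hx, hvx⟩) u hvu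
    · exact Or.inr ⟨v, hv, (hQ v u hvu).2⟩
    · exact Or.inl (Option.some.inj (hvu.symm.trans hvx) ▸ hx)
  have hinner : IsMatchingOn R W (splice X M Q) := by
    refine ⟨isMatching_splice hM hQ hXM, fun u v huv => ?_⟩
    rcases splice_eq_some huv with ⟨hu, huv⟩ | ⟨-, huv⟩
    · exact ⟨hXW hu, hXW (hXM u hu v huv)⟩
    · exact ⟨hQW u v huv, hQW v u (hQ u v huv).2⟩
  have houter : ∀ u v, splice (partnerClosure Q X) Q M u = some v → ¬ Blocks R P u v := by
    intro u v huv hb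
    rcases splice_eq_some huv with ⟨-, huv⟩ | ⟨hu, huv⟩
    · exact hb.2.1 ((hPW u (hQW u v huv)).trans huv)
    · exact hu (Or.inl (hXbad u v huv hb))
  rw [Finset.sum_congr rfl fun v _ =>
    vote_eq_vote_splice_add_vote_splice hM hP hQ hQW hPW hXW hXM hexit v, Finset.sum_add_distrib]
  linarith [sum_vote_nonpos_of_not_blocks (isMatching_splice hQ hM hCQ) hP houter,
    sum_vote_nonpos_of_popularOn hQW hpop hinner]

end Surgery

theorem altList_append_pair {A : V → V → Prop} {M : V → Option V} :
    ∀ {β : Bool} {l : List V} {a c : V}, AltList A M β (l ++ [a]) →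
      AltList A M (β ^^ decide (Odd l.length)) [a, c] → AltList A M β (l ++ [a, c])
  | β, [], a, c, _, h => by simpa using h
  | β, [d], a, c, h₁, h₂ => by
      cases β <;> simp_all [AltList]
  | β, d :: e :: l, a, c, h₁, h₂ => by
      have ih := @altList_append_pair A M (!β) (e :: l) a c
      cases β <;> simp_all [AltList, Nat.odd_add_one, ← Nat.not_even_iff_odd]

def NonMatchEdgeOn (R : Roommates V) (W : Set V) (M : V → Option V) (a b : V) : Prop :=
  a ∈ W ∧ b ∈ W ∧ NonMatchEdge R M a b

def IsDangerous (R : Roommates V) (W : Set V) (M : V → Option V) (z : V) : Prop :=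
  ∃ (l : List V) (x y : V) (t : List V),
    l = x :: y :: t ∧ x ∈ W ∧ y ∈ W ∧ Blocks R M x y ∧
    AltList (NonMatchEdgeOn R W M) M false l ∧ l.Nodup ∧ Odd l.length ∧ l.getLast? = some z

inductive BlockingTrail (R : Roommates V) (W : Set V) (Q M : V → Option V) : List V → Prop
  | pair {x y : V} : x ∈ W → y ∈ W → Blocks R Q x y → M x = some y →
      BlockingTrail R W Q M [x, y]
  | extend {l : List V} {v u b : V} : BlockingTrail R W Q M l → l.getLast? = some v →
      Q v = some u → u ∉ l → M u = some b → NonMatchEdgeOn R W Q u b →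
      BlockingTrail R W Q M (l ++ [u, b])

def blockingTrailVertices (R : Roommates V) (W : Set V) (Q M : V → Option V) : Set V :=
  {v | ∃ l, BlockingTrail R W Q M l ∧ v ∈ l}

namespace BlockingTrail

variable {R : Roommates V} {W : Set V} {Q M : V → Option V} {l : List V}

lemma subset (h : BlockingTrail R W Q M l) : ∀ v ∈ l, v ∈ W := by
  induction h with
  | pair hx hy => simp [hx, hy]
  | extend _ _ _ _ _ hub ih => simp_all [or_imp, hub.1, hub.2.1]

lemma partner_mem (hM : IsMatching R M) (h : BlockingTrail R W Q M l) :
    ∀ v ∈ l, ∀ u, M v = some u → u ∈ l := by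
  induction h with
  | pair _ _ _ hxy =>
    simp only [List.mem_cons, List.not_mem_nil, or_false]
    rintro v (rfl | rfl) u hvu
    · exact Or.inr (Option.some.inj (hvu.symm.trans hxy))
    · exact Or.inl (Option.some.inj (hvu.symm.trans (hM _ _ hxy).2))
  | extend _ _ _ _ hub _ ih =>
    simp only [List.mem_append, List.mem_cons, List.not_mem_nil, or_false]
    rintro v (hv | rfl | rfl) w hvw
    · exact Or.inl (ih v hv w hvw)
    · exact Or.inr (Or.inr (Option.some.inj (hvw.symm.trans hub)))
    · exact Or.inr (Or.inl (Option.some.inj (hvw.symm.trans (hM _ _ hub).2)))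

lemma nodup (hM : IsMatching R M) (h : BlockingTrail R W Q M l) : l.Nodup := by
  induction h with
  | pair _ _ hb => simpa using hb.1.ne
  | @extend l v u b h _ _ hul hub _ ih =>
    have hbl : b ∉ l := fun hbl => hul (h.partner_mem hM b hbl u (hM u b hub).2)
    refine List.nodup_append.2 ⟨ih, by simpa using (hM u b hub).1.ne, ?_⟩
    intro a ha c hc hac
    subst hac
    rcases List.mem_pair.1 hc with rfl | rfl
    exacts [hul ha, hbl ha]

lemma even_length (h : BlockingTrail R W Q M l) : Even l.length := by
  induction h with
  | pair => exact ⟨1, rfl⟩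
  | extend _ _ _ _ _ _ ih => simpa [Nat.even_add] using ih

lemma exists_eq_cons (h : BlockingTrail R W Q M l) :
    ∃ x y t, l = x :: y :: t ∧ x ∈ W ∧ y ∈ W ∧ Blocks R Q x y := by
  induction h with
  | pair hx hy hb => exact ⟨_, _, [], rfl, hx, hy, hb⟩
  | extend _ _ _ _ _ _ ih =>
    obtain ⟨x, y, t, rfl, hx, hy, hb⟩ := ih
    exact ⟨x, y, t ++ _, rfl, hx, hy, hb⟩

lemma altList_append (h : BlockingTrail R W Q M l) {v u : V} (hv : l.getLast? = some v)
    (hvu : Q v = some u) : AltList (NonMatchEdgeOn R W Q) Q false (l ++ [u]) := by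
  induction h generalizing v u with
  | pair hx hy hb =>
    obtain rfl : _ = v := by simpa using hv
    exact ⟨⟨hx, hy, hb.1, hb.2.1, Or.inl hb.2.2.1⟩, hvu, trivial⟩
  | @extend l v' u' b h hv' hvu' _ _ hub ih =>
    obtain rfl : b = v := by simpa using hv
    have hl := h.even_length
    have hub' : AltList (NonMatchEdgeOn R W Q) Q false (l ++ [u', b]) :=
      altList_append_pair (ih hv' hvu') (by simpa [AltList, Nat.not_odd_iff_even.2 hl] using hub)
    have := altList_append_pair (l := l ++ [u']) (c := u) (by simpa using hub')
      (by simpa [AltList, Nat.odd_add_one, hl] using hvu)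
    simpa using this

lemma isDangerous (hM : IsMatching R M) (h : BlockingTrail R W Q M l) {v u : V}
    (hv : l.getLast? = some v) (hvu : Q v = some u) (hul : u ∉ l) : IsDangerous R W Q u := by
  have hnodup : (l ++ [u]).Nodup := List.nodup_append.2
    ⟨h.nodup hM, List.nodup_singleton u, fun a ha b hb hab => by simp_all⟩
  have hodd : Odd (l ++ [u]).length := by simpa [Nat.odd_add_one] using h.even_length
  have hlast : (l ++ [u]).getLast? = some u := by simp
  have halt := h.altList_append hv hvu
  obtain ⟨x, y, t, rfl, hx, hy, hb⟩ := h.exists_eq_cons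
  exact ⟨_, x, y, t ++ [u], rfl, hx, hy, hb, halt, hnodup, hodd, hlast⟩

lemma mem_or_exists_getLast? (hQ : IsMatching R Q) (hM : IsMatching R M)
    (h : BlockingTrail R W Q M l) : ∀ v ∈ l, ∀ u, Q v = some u →
      u ∈ l ∨ ∃ l', BlockingTrail R W Q M l' ∧ l'.getLast? = some v := by
  induction h with
  | @pair x y hx hy hb hxy =>
    simp only [List.mem_cons, List.not_mem_nil, or_false]
    rintro v (rfl | rfl) u -
    · exact Or.inr ⟨[y, v], pair hy hx (hb.symm hQ) (hM _ _ hxy).2, rfl⟩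
    · exact Or.inr ⟨[x, v], pair hx hy hb hxy, rfl⟩
  | extend h hv hvu hul hub hA ih =>
    simp only [List.mem_append, List.mem_cons, List.not_mem_nil, or_false]
    rintro w (hw | rfl | rfl) u' hwu'
    · exact (ih w hw u' hwu').imp_left Or.inl
    · exact Or.inl (Or.inl (Option.some.inj (hwu'.symm.trans (hQ _ _ hvu).2) ▸
        List.mem_of_getLast? hv))
    · exact Or.inr ⟨_, extend h hv hvu hul hub hA, by simp⟩

end BlockingTrail

section Extension

variable {R : Roommates V} {W : Set V} {Q P M : V → Option V}

lemma blockingTrail_exit (hQ : IsMatching R Q) (hQW : ∀ u v, Q u = some v → u ∈ W)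
    (hPW : ∀ v ∈ W, P v = Q v) (hM : IsMatching R M)
    (hcut : ∀ z b, IsDangerous R W Q z → b ∉ W → R.G.Adj z b →
      ¬ VotePlus R P z b ∧ ¬ VotePlus R P b z) :
    ∀ x ∈ blockingTrailVertices R W Q M, ∀ u, Q x = some u →
      u ∉ blockingTrailVertices R W Q M →
      IsDeadEnd R P M u := by
  rintro x ⟨l, hl, hxl⟩ u hxu huX
  have hu : ∀ l', BlockingTrail R W Q M l' → u ∉ l' := fun l' hl' hul =>
    huX ⟨l', hl', hul⟩
  obtain hul | ⟨l', hl', hlast⟩ := hl.mem_or_exists_getLast? hQ hM x hxl u hxu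
  · exact absurd hul (hu l hl)
  unfold IsDeadEnd
  rcases hMu : M u with _ | b
  · exact Or.inl rfl
  refine Or.inr ⟨b, rfl, ?_⟩
  have hadj := (hM u b hMu).1
  by_cases hbW : b ∈ W
  · have huW : u ∈ W := hQW u x (hQ x u hxu).2
    have hbx : Q u ≠ some b := by
      intro hub
      rw [← Option.some.inj ((hQ x u hxu).2.symm.trans hub)] at hMu
      exact hu l hl (hl.partner_mem hM x hxl u (hM u x hMu).2)
    have hnm : ¬ NonMatchEdge R Q u b := fun hnm =>
      hu _ (hl'.extend hlast hxu (hu l' hl') hMu ⟨huW, hbW, hnm⟩) (by simp)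
    rw [votePlus_congr (hPW u huW), votePlus_congr (hPW b hbW)]
    exact not_or.1 fun h => hnm ⟨hadj, hbx, h⟩
  · exact hcut u b (hl'.isDangerous hM hlast hxu (hu l' hl')) hbW hadj

theorem popular_of_popularOn [Fintype V] (hQ : IsMatching R Q)
    (hQW : ∀ u v, Q u = some v → u ∈ W) (hP : IsMatching R P) (hPW : ∀ v ∈ W, P v = Q v)
    (hpop : PopularOn R W Q) (hbad : ∀ u v, Blocks R P u v → u ∈ W)
    (hcut : ∀ z b, IsDangerous R W Q z → b ∉ W → R.G.Adj z b →
      ¬ VotePlus R P z b ∧ ¬ VotePlus R P b z) :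
    Popular R P := by
  intro M hM
  have hXbad : ∀ u v, M u = some v → Blocks R P u v →
      u ∈ blockingTrailVertices R W Q M := by
    intro u v huv hb
    have huW := hbad u v hb
    have hvW := hbad v u (hb.symm hP)
    exact ⟨[u, v], .pair huW hvW ((blocks_congr (hPW u huW) (hPW v hvW)).1 hb) huv, by simp⟩
  have := sum_vote_nonpos_of_surgery hM hP hQ hQW hPW hpop
    (by rintro v ⟨l, hl, hvl⟩; exact hl.subset v hvl)
    (by rintro v ⟨l, hl, hvl⟩ u hvu; exact ⟨l, hl, hl.partner_mem hM v hvl u hvu⟩)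
    hXbad (blockingTrail_exit hQ hQW hPW hM hcut)
  rw [sum_vote_eq_ncard_sub] at this
  omega

end Extension

section Union

variable {R : Roommates V} {W : Set V} {Q S P : V → Option V}

lemma union_eq_left_of_mem (hSW : ∀ u v, S u = some v → u ∉ W) (hP : ∀ v, P v = (Q v).or (S v))
    {v : V} (hv : v ∈ W) : P v = Q v := by
  rw [hP, Option.eq_none_iff_forall_ne_some.2 fun w h => hSW v w h hv, Option.or_none]

lemma union_eq_right_of_not_mem (hQW : ∀ u v, Q u = some v → u ∈ W)
    (hP : ∀ v, P v = (Q v).or (S v)) {v : V} (hv : v ∉ W) : P v = S v := by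
  rw [hP, Option.eq_none_iff_forall_ne_some.2 fun w h => hv (hQW v w h), Option.none_or]

lemma isMatching_union (hQ : IsMatching R Q) (hS : IsMatching R S)
    (hQW : ∀ u v, Q u = some v → u ∈ W) (hSW : ∀ u v, S u = some v → u ∉ W)
    (hP : ∀ v, P v = (Q v).or (S v)) : IsMatching R P := by
  intro u v huv
  by_cases hu : u ∈ W
  · rw [union_eq_left_of_mem hSW hP hu] at huv
    rw [union_eq_left_of_mem hSW hP (hQW v u (hQ u v huv).2)]
    exact hQ u v huv
  · rw [union_eq_right_of_not_mem hQW hP hu] at huv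
    have hv : v ∉ W := fun hv => hSW v u (hS u v huv).2 hv
    rw [union_eq_right_of_not_mem hQW hP hv]
    exact hS u v huv

end Union

lemma mem_of_blocks_of_labeling {R : Roommates V} {W U D : Set V} {S P : V → Option V}
    (hPS : ∀ v ∉ W, P v = S v) (hSstab : ∀ p q, p ∉ W → q ∉ W → ¬ Blocks R S p q)
    (lab1 : ∀ u ∈ U, ∀ v, R.G.Adj u v → ∃ w, P v = some w ∧ R.rank v w < R.rank v u)
    (lab2 : ∀ z ∈ D, ∀ x, x ∉ W → R.G.Adj z x →
      ¬ VotePlus R P z x ∧ ¬ VotePlus R P x z)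
    (lab3 : ∀ v', v' ∈ W → v' ∉ D → v' ∉ U → ∀ x, x ∉ W → R.G.Adj v' x →
      VotePlus R P v' x → ¬ VotePlus R P x v')
    {u v : V} (hb : Blocks R P u v) : u ∈ W := by
  by_contra hu
  by_cases hvU : v ∈ U
  · obtain ⟨w, hw, hlt⟩ := lab1 v hvU u hb.1.symm
    exact (hb.2.2.1 w hw).not_gt hlt
  by_cases hvD : v ∈ D
  · exact (lab2 v hvD u hu hb.1.symm).1 hb.2.2.2
  by_cases hvW : v ∈ W
  · exact lab3 v hvW hvD hvU u hu hb.1.symm hb.2.2.2 hb.2.2.1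
  exact hSstab u v hu hvW ((blocks_congr (hPS u hu) (hPS v hvW)).1 hb)

lemma eq_none_iff_mem_of_cover {R : Roommates V} {U Z V' : Set V}
    {PZ S P : V → Option V}
    (hZ : Z = {w | w ∉ U ∧ ∀ x ∈ U, ¬ R.G.Adj w x}) (hPZ : IsMatching R PZ)
    (hcov : ∀ z ∈ Z, ∃ y, PZ z = some y)
    (hmeet : ∀ u v, PZ u = some v → u ∈ Z ∨ v ∈ Z)
    (hV' : V' = Z ∪ {y | ∃ z ∈ Z, PZ z = some y} ∪ U)
    (hSW : ∀ u v, S u = some v → u ∉ V') (hScov : ∀ x, x ∉ V' → ∃ y, S x = some y)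
    (hP : ∀ v, P v = (PZ v).or (S v)) (v : V) : P v = none ↔ v ∈ U := by
  rw [hP, Option.or_eq_none_iff]
  constructor
  · rintro ⟨hPZv, hSv⟩
    by_contra hvU
    have hvW : v ∈ V' := by
      by_contra hvW
      obtain ⟨y, hy⟩ := hScov v hvW
      simp [hy] at hSv
    rw [hV'] at hvW
    rcases hvW with (hvZ | ⟨z, -, hzv⟩) | hvU'
    · obtain ⟨y, hy⟩ := hcov v hvZ
      simp [hy] at hPZv
    · simp [(hPZ z v hzv).2] at hPZv
    · exact hvU hvU'
  · intro hvU
    refine ⟨Option.eq_none_iff_forall_ne_some.2 fun w hw => ?_,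
      Option.eq_none_iff_forall_ne_some.2 fun w hw => hSW v w hw (hV' ▸ Or.inr hvU)⟩
    rcases hmeet v w hw with hvZ | hwZ
    · rw [hZ] at hvZ; exact hvZ.1 hvU
    · rw [hZ] at hwZ; exact hwZ.2 v hvU (hPZ v w hw).1.symm

theorem claim4_backward_general {V : Type*} [Fintype V] (R : Roommates V)
    (U : Set V)
    (Z : Set V) (hZ : Z = {w | w ∉ U ∧ ∀ x ∈ U, ¬ R.G.Adj w x})
    (PZ : V → Option V) (hPZ : IsMatching R PZ)
    (hcov : ∀ z ∈ Z, ∃ y, PZ z = some y)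
    (hmeet : ∀ u v, PZ u = some v → u ∈ Z ∨ v ∈ Z)
    (V' : Set V) (hV' : V' = Z ∪ {y | ∃ z ∈ Z, PZ z = some y} ∪ U)
    (hpopZ : PopularOn R V' PZ)
    (D : Set V)
    (hD : D = {z | ∃ (l : List V) (x y : V) (t : List V),
      l = x :: y :: t ∧ x ∈ V' ∧ y ∈ V' ∧ Blocks R PZ x y ∧
      AltList (fun a b => a ∈ V' ∧ b ∈ V' ∧ NonMatchEdge R PZ a b) PZ false l ∧
      l.Nodup ∧ Odd l.length ∧ l.getLast? = some z})
    (S : V → Option V) (hS : IsMatching R S)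
    (hSin : ∀ u v, S u = some v → u ∉ V' ∧ v ∉ V')
    (hScov : ∀ x, x ∉ V' → ∃ y, S x = some y)
    (hSstab : ∀ p q, p ∉ V' → q ∉ V' → ¬ Blocks R S p q)
    (P : V → Option V) (hPdef : ∀ v, P v = (PZ v).or (S v))
    -- labeling condition 1: edges at `U` are `(+,−)` with `+` at the `U`-vertex
    (lab1 : ∀ u ∈ U, ∀ v, R.G.Adj u v → ∃ w, P v = some w ∧ R.rank v w < R.rank v u)
    -- labeling condition 2: edges between `D` and `V ∖ V'` are `(−,−)`
    (lab2 : ∀ z ∈ D, ∀ x, x ∉ V' → R.G.Adj z x →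
      ¬ VotePlus R P z x ∧ ¬ VotePlus R P x z)
    -- labeling condition 3: edges `(v',x)` with `v' ∈ V' ∖ (D ∪ U)`, `x ∉ V'`
    -- and `x ≻_{v'} P(v')` are `(+,−)` with `+` at `v'`
    (lab3 : ∀ v', v' ∈ V' → v' ∉ D → v' ∉ U → ∀ x, x ∉ V' → R.G.Adj v' x →
      VotePlus R P v' x → ¬ VotePlus R P x v') :
    IsMatching R P ∧ Popular R P ∧ (∀ v, P v = none ↔ v ∈ U) := by
  have hPZW : ∀ u v, PZ u = some v → u ∈ V' := by
    intro u v huv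
    rw [hV']
    rcases hmeet u v huv with hu | hv
    · exact Or.inl (Or.inl hu)
    · exact Or.inl (Or.inr ⟨v, hv, (hPZ u v huv).2⟩)
  have hSW : ∀ u v, S u = some v → u ∉ V' := fun u v h => (hSin u v h).1
  have hP : IsMatching R P := isMatching_union hPZ hS hPZW hSW hPdef
  refine ⟨hP, popular_of_popularOn hPZ hPZW hP (fun v => union_eq_left_of_mem hSW hPdef) hpopZ
    (fun u v => mem_of_blocks_of_labeling (fun v => union_eq_right_of_not_mem hPZW hPdef) hSstab
      lab1 lab2 lab3) (fun z b hz => lab2 z (hD ▸ hz) b),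
    eq_none_iff_mem_of_cover hZ hPZ hcov hmeet hV' hSW hScov hPdef⟩

/-- Claim 4, backward direction: if `P_Z` is popular but not
stable in `G' = G[V']`, and `S` is a matching on `G[V ∖ V']` that is stable,
covers exactly `V ∖ V'`, and `P = P_Z ∪ S` induces the three-point edge
labeling, then `P` is a popular matching of `G` leaving exactly `U` uncovered. -/
theorem claim4_backward {V : Type*} [Fintype V] (R : Roommates V)
    (U : Set V)
    (Z : Set V) (hZ : Z = {w | w ∉ U ∧ ∀ x ∈ U, ¬ R.G.Adj w x})
    (PZ : V → Option V) (hPZ : IsMatching R PZ)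
    (hcov : ∀ z ∈ Z, ∃ y, PZ z = some y)
    (hmeet : ∀ u v, PZ u = some v → u ∈ Z ∨ v ∈ Z)
    (V' : Set V) (hV' : V' = Z ∪ {y | ∃ z ∈ Z, PZ z = some y} ∪ U)
    (hpopZ : PopularOn R V' PZ) (hnotstabZ : ¬ StableOn R V' PZ)
    (D : Set V)
    (hD : D = {z | ∃ (l : List V) (x y : V) (t : List V),
      l = x :: y :: t ∧ x ∈ V' ∧ y ∈ V' ∧ Blocks R PZ x y ∧
      AltList (fun a b => a ∈ V' ∧ b ∈ V' ∧ NonMatchEdge R PZ a b) PZ false l ∧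
      l.Nodup ∧ Odd l.length ∧ l.getLast? = some z})
    (S : V → Option V) (hS : IsMatching R S)
    (hSin : ∀ u v, S u = some v → u ∉ V' ∧ v ∉ V')
    (hScov : ∀ x, x ∉ V' → ∃ y, S x = some y)
    (hSstab : ∀ p q, p ∉ V' → q ∉ V' → ¬ Blocks R S p q)
    (P : V → Option V) (hPdef : ∀ v, P v = (PZ v).or (S v))
    -- labeling condition 1: edges at `U` are `(+,−)` with `+` at the `U`-vertex
    (lab1 : ∀ u ∈ U, ∀ v, R.G.Adj u v → ∃ w, P v = some w ∧ R.rank v w < R.rank v u)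
    -- labeling condition 2: edges between `D` and `V ∖ V'` are `(−,−)`
    (lab2 : ∀ z ∈ D, ∀ x, x ∉ V' → R.G.Adj z x →
      ¬ VotePlus R P z x ∧ ¬ VotePlus R P x z)
    -- labeling condition 3: edges `(v',x)` with `v' ∈ V' ∖ (D ∪ U)`, `x ∉ V'`
    -- and `x ≻_{v'} P(v')` are `(+,−)` with `+` at `v'`
    (lab3 : ∀ v', v' ∈ V' → v' ∉ D → v' ∉ U → ∀ x, x ∉ V' → R.G.Adj v' x →
      VotePlus R P v' x → ¬ VotePlus R P x v') :
    IsMatching R P ∧ Popular R P ∧ (∀ v, P v = none ↔ v ∈ U) :=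
  claim4_backward_general R U Z hZ PZ hPZ hcov hmeet V' hV' hpopZ D hD S hS hSin hScov hSstab P
    hPdef lab1 lab2 lab3
end
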